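/- Let ω_n(λ) = Σ_{m≥1} β_n^{(m)} λ^{-m} be formal power series in λ^{-1} with coefficients satisfying m·β_n^{(m)} = n·β_m^{(n)}. Set q_{mn} = m β_n^{(m)} and s_n = (n/2) Σ_{j=1}^{n−1} q_{n−j,j}/(j(n−j)). Then the quadratic function Q(t) = (1/2)Σ_{i,j≥1} q_{ij} t_i t_j + Σ_{i≥2} s_i t_i satisfies −Q(t − [λ^{-1}]) + Q(t) = Σ_{n≥1} ω_n(λ) t_n, where t − [λ^{-1}] = (t₁ − λ^{-1}, t₂ − 1/(2λ²), t₃ − 1/(3λ³), ...). -/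

import Mathlib

/-!
Write `v_i = X^i/i` for the Miwa shift. Since `q_{ij} = i β_j^{(i)}` is symmetric,
polarisation gives `Q(t) - Q(t - v) = Σ q_{ij} v_i t_j - ½ Σ q_{ij} v_i v_j + Σ s_i v_i`.
At `X^m` the first term contributes `Σ_j q_{mj} t_j / m = Σ_j β_j^{(m)} t_j`, the second
`-½ Σ_{i+j=m} q_{ij}/(ij)`, and the third `s_m/m`, which is exactly what cancels the second.
-/

open Polynomial

/-- The (truncated) quadratic function
`Q(u) = (1/2)Σ_{1≤i,j≤N} q_{ij} u_i u_j + Σ_{2≤i≤N} s_i u_i`, evaluated on a sequence of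
polynomials `u` in the formal variable `X = λ^{-1}`. -/
noncomputable def Qquad {F : Type*} [Field F] (N : ℕ) (q : ℕ → ℕ → F) (s : ℕ → F)
    (u : ℕ → Polynomial F) : Polynomial F :=
  C (1/2 : F) * ∑ i ∈ Finset.Icc 1 N, ∑ j ∈ Finset.Icc 1 N, C (q i j) * (u i * u j)
    + ∑ i ∈ Finset.Icc 2 N, C (s i) * u i

open Finset

section
variable {F : Type*} [Field F]

theorem Qquad_sub_Qquad_sub [NeZero (2 : F)] {N : ℕ} {q : ℕ → ℕ → F}
    (hq : ∀ i ∈ Icc 1 N, ∀ j ∈ Icc 1 N, q i j = q j i) (s : ℕ → F) (a b : ℕ → F[X]) :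
    Qquad N q s a - Qquad N q s (fun i => a i - b i)
      = ∑ i ∈ Icc 1 N, ∑ j ∈ Icc 1 N, C (q i j) * (b i * a j)
        - C (1/2 : F) * ∑ i ∈ Icc 1 N, ∑ j ∈ Icc 1 N, C (q i j) * (b i * b j)
        + ∑ i ∈ Icc 2 N, C (s i) * b i := by
  have hswap : ∑ i ∈ Icc 1 N, ∑ j ∈ Icc 1 N, C (q i j) * (a i * b j)
      = ∑ i ∈ Icc 1 N, ∑ j ∈ Icc 1 N, C (q i j) * (b i * a j) := by
    rw [sum_comm]
    refine sum_congr rfl fun i hi => sum_congr rfl fun j hj => ?_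
    rw [hq j hj i hi, mul_comm (a j)]
  calc Qquad N q s a - Qquad N q s (fun i => a i - b i)
      = C (1/2 : F) * (∑ i ∈ Icc 1 N, ∑ j ∈ Icc 1 N, C (q i j) * (a i * b j)
          + ∑ i ∈ Icc 1 N, ∑ j ∈ Icc 1 N, C (q i j) * (b i * a j))
        - C (1/2 : F) * ∑ i ∈ Icc 1 N, ∑ j ∈ Icc 1 N, C (q i j) * (b i * b j)
        + ∑ i ∈ Icc 2 N, C (s i) * b i := by
        simp only [Qquad, sub_mul, mul_sub, mul_add, sum_sub_distrib]
        ring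
    _ = _ := by
      rw [hswap, ← two_mul, ← mul_assoc, ← C_ofNat, ← C_mul, one_div_mul_cancel two_ne_zero,
        C_1, one_mul]

/-- The Miwa shift `[λ^{-1}]_i = λ^{-i}/i`, written in `X = λ^{-1}`. -/
noncomputable def miwa (i : ℕ) : F[X] := C (i : F)⁻¹ * X ^ i

theorem coeff_miwa (i m : ℕ) : (miwa i : F[X]).coeff m = if m = i then (i : F)⁻¹ else 0 :=
  coeff_C_mul_X_pow _ _ _

theorem miwa_mul_miwa (i j : ℕ) :
    (miwa i * miwa j : F[X]) = C ((i : F)⁻¹ * (j : F)⁻¹) * X ^ (i + j) := by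
  simp only [miwa, C_mul, pow_add]
  ring

theorem coeff_sum_sum_miwa_mul_C (q : ℕ → ℕ → F) (t : ℕ → F) {m N : ℕ} (hm : m ∈ Icc 1 N) :
    (∑ i ∈ Icc 1 N, ∑ j ∈ Icc 1 N, C (q i j) * (miwa i * C (t j))).coeff m
      = ∑ j ∈ Icc 1 N, q m j / m * t j := by
  simp only [finsetSum_coeff, coeff_C_mul, coeff_mul_C, coeff_miwa, ite_mul, zero_mul, mul_ite,
    mul_zero]
  rw [sum_comm]
  refine sum_congr rfl fun j _ => ?_
  rw [sum_ite_eq, if_pos hm]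
  ring

theorem sum_Icc_sum_Icc_ite_add_eq {M : Type*} [AddCommMonoid M] (f : ℕ → ℕ → M) {m N : ℕ}
    (hm : m ≤ N + 1) :
    ∑ i ∈ Icc 1 N, ∑ j ∈ Icc 1 N, (if m = i + j then f i j else 0)
      = ∑ j ∈ Icc 1 (m - 1), f (m - j) j := by
  rw [← sum_product' (f := fun i j => if m = i + j then f i j else 0), ← sum_filter]
  symm
  refine sum_nbij' (fun j => (m - j, j)) Prod.snd (fun j hj => ?_) (fun p hp => ?_)
    (fun j _ => rfl) (fun p hp => ?_) fun _ _ => rfl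
  all_goals simp only [mem_filter, mem_product, mem_Icc, Prod.ext_iff, and_true] at *
  all_goals omega

theorem coeff_sum_sum_miwa_mul_miwa (q : ℕ → ℕ → F) {m N : ℕ} (hm : m ≤ N + 1) :
    (∑ i ∈ Icc 1 N, ∑ j ∈ Icc 1 N, C (q i j) * (miwa i * miwa j)).coeff m
      = ∑ j ∈ Icc 1 (m - 1), q (m - j) j / ((j : F) * ((m : F) - (j : F))) := by
  simp only [finsetSum_coeff, coeff_C_mul, miwa_mul_miwa, coeff_X_pow, mul_ite, mul_one, mul_zero]
  rw [sum_Icc_sum_Icc_ite_add_eq _ hm]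
  refine sum_congr rfl fun j hj => ?_
  rw [Nat.cast_sub (by grind), div_eq_mul_inv, mul_inv, mul_comm (j : F)⁻¹]

theorem coeff_sum_C_mul_miwa (s : ℕ → F) (hs1 : s 1 = 0) {m N : ℕ} (hm : m ∈ Icc 1 N) :
    (∑ i ∈ Icc 2 N, C (s i) * miwa i).coeff m = s m / m := by
  simp only [finsetSum_coeff, coeff_C_mul, coeff_miwa, mul_ite, mul_zero]
  rw [sum_ite_eq]
  split_ifs with h
  · exact (div_eq_mul_inv _ _).symm
  · obtain rfl : m = 1 := by grind
    simp [hs1]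

end

theorem Q_generates_omega_general {F : Type*} [Field F] [CharZero F]
    (β : ℕ → ℕ → F)
    (hsym : ∀ m n : ℕ, 1 ≤ m → 1 ≤ n → (m : F) * β n m = (n : F) * β m n)
    (q : ℕ → ℕ → F) (hq : ∀ m n, q m n = (m : F) * β n m)
    (s : ℕ → F)
    (hs : ∀ n, s n = ((n : F) / 2)
      * ∑ j ∈ Finset.Icc 1 (n - 1), q (n - j) j / ((j : F) * ((n : F) - (j : F))))
    (t : ℕ → F) (N : ℕ)
    (m : ℕ) (hm1 : 1 ≤ m) (hmN : m ≤ N) :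
    (Qquad N q s (fun i => C (t i))
        - Qquad N q s (fun i => C (t i) - C ((i : F))⁻¹ * X ^ i)).coeff m
      = ∑ n ∈ Finset.Icc 1 N, β n m * t n := by
  have hm : m ∈ Icc 1 N := mem_Icc.2 ⟨hm1, hmN⟩
  have hm0 : (m : F) ≠ 0 := Nat.cast_ne_zero.2 (by omega)
  have hq_symm : ∀ i ∈ Icc 1 N, ∀ j ∈ Icc 1 N, q i j = q j i := fun i hi j hj => by
    rw [hq, hq, hsym i j (mem_Icc.1 hi).1 (mem_Icc.1 hj).1]
  have hs1 : s 1 = 0 := by simp [hs]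
  have hlinear : ∑ j ∈ Icc 1 N, q m j / m * t j = ∑ n ∈ Icc 1 N, β n m * t n :=
    sum_congr rfl fun j _ => by rw [hq, mul_div_cancel_left₀ _ hm0]
  change (Qquad N q s (fun i => C (t i)) - Qquad N q s (fun i => C (t i) - miwa i)).coeff m = _
  rw [Qquad_sub_Qquad_sub hq_symm, coeff_add, coeff_sub, coeff_sum_sum_miwa_mul_C q t hm,
    coeff_C_mul, coeff_sum_sum_miwa_mul_miwa q (by omega), coeff_sum_C_mul_miwa s hs1 hm, hs m,
    hlinear]
  field_simp
  ring

/-- Let `ω_n(λ) = Σ_{m≥1} β_n^{(m)} λ^{-m}` with `m β_n^{(m)} = n β_m^{(n)}`, and set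
`q_{mn} = m β_n^{(m)}`, `s_n = (n/2) Σ_{j=1}^{n−1} q_{n−j,j}/(j(n−j))`.  Then
`−Q(t − [λ^{-1}]) + Q(t) = Σ_n ω_n(λ) t_n` as formal power series in `λ^{-1}`:  for each
power `λ^{-m}` (with `1 ≤ m ≤ N`, `N` a truncation bound past the support of `t`), the
coefficients of the two sides agree.  Here `X` plays the role of `λ^{-1}` and
`[λ^{-1}]_i = λ^{-i}/i = X^i/i`. -/
theorem Q_generates_omega {F : Type*} [Field F] [CharZero F]
    (β : ℕ → ℕ → F)
    (hsym : ∀ m n : ℕ, 1 ≤ m → 1 ≤ n → (m : F) * β n m = (n : F) * β m n)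
    (q : ℕ → ℕ → F) (hq : ∀ m n, q m n = (m : F) * β n m)
    (s : ℕ → F)
    (hs : ∀ n, s n = ((n : F) / 2)
      * ∑ j ∈ Finset.Icc 1 (n - 1), q (n - j) j / ((j : F) * ((n : F) - (j : F))))
    (t : ℕ → F) (M N : ℕ) (ht : ∀ i, M < i → t i = 0) (hMN : M ≤ N)
    (m : ℕ) (hm1 : 1 ≤ m) (hmN : m ≤ N) :
    (Qquad N q s (fun i => C (t i))
        - Qquad N q s (fun i => C (t i) - C ((i : F))⁻¹ * X ^ i)).coeff m
      = ∑ n ∈ Finset.Icc 1 N, β n m * t n :=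
  Q_generates_omega_general β hsym q hq s hs t N m hm1 hmN
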